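/- Correctness of the unique-successor formula: let φ be a QCTL formula and p an atomic proposition not occurring in φ; then for every Kripke structure K and state x, K,x ⊨ EX φ ∧ ∀p.( AX(φ → p) ∨ AX(φ → ¬p) ) if and only if x has exactly one E-successor satisfying φ. -/

import Mathlib

open Classical

/-- Syntax of QCTL: `φ ::= q | ¬φ | φ∨ψ | EX φ | E φ U ψ | A φ U ψ | ∃p.φ`. -/
inductive QCTL (AP : Type) : Type where
  | atom : AP → QCTL AP
  | qneg : QCTL AP → QCTL AP
  | qor  : QCTL AP → QCTL AP → QCTL AP
  | qEX  : QCTL AP → QCTL AP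
  | qEU  : QCTL AP → QCTL AP → QCTL AP
  | qAU  : QCTL AP → QCTL AP → QCTL AP
  | qexi : AP → QCTL AP → QCTL AP

/-- A Kripke structure over atomic propositions `AP` with (finite) state space `V`:
a serial edge relation and a labelling function. -/
structure Kripke (AP V : Type) where
  E : V → V → Prop
  serial : ∀ v, ∃ w, E v w
  label : V → Set AP

variable {AP V : Type}

/-- `K'` agrees with `K` (same edges) except possibly on the labelling of `p`. -/
def Kripke.AgreeExcept (K K' : Kripke AP V) (p : AP) : Prop :=
  K'.E = K.E ∧ ∀ v q, q ≠ p → (q ∈ K'.label v ↔ q ∈ K.label v)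

/-- Structure semantics of QCTL. -/
def QCTL.sat : QCTL AP → Kripke AP V → V → Prop
  | .atom p, K, x => p ∈ K.label x
  | .qneg φ, K, x => ¬ φ.sat K x
  | .qor φ ψ, K, x => φ.sat K x ∨ ψ.sat K x
  | .qEX φ, K, x => ∃ y, K.E x y ∧ φ.sat K y
  | .qEU φ ψ, K, x => ∃ ρ : ℕ → V, ρ 0 = x ∧ (∀ i, K.E (ρ i) (ρ (i + 1))) ∧
      ∃ i, ψ.sat K (ρ i) ∧ ∀ j < i, φ.sat K (ρ j)
  | .qAU φ ψ, K, x => ∀ ρ : ℕ → V, ρ 0 = x → (∀ i, K.E (ρ i) (ρ (i + 1))) →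
      ∃ i, ψ.sat K (ρ i) ∧ ∀ j < i, φ.sat K (ρ j)
  | .qexi p φ, K, x => ∃ K' : Kripke AP V, K.AgreeExcept K' p ∧ φ.sat K' x

namespace QCTL

def qand (φ ψ : QCTL AP) : QCTL AP := qneg (qor (qneg φ) (qneg ψ))
def qimp (φ ψ : QCTL AP) : QCTL AP := qor (qneg φ) ψ
def qiff (φ ψ : QCTL AP) : QCTL AP := qand (qimp φ ψ) (qimp ψ φ)
def qtop [Inhabited AP] : QCTL AP := qor (atom default) (qneg (atom default))
def qbot [Inhabited AP] : QCTL AP := qneg qtop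
def qAX (φ : QCTL AP) : QCTL AP := qneg (qEX (qneg φ))
def qEF [Inhabited AP] (φ : QCTL AP) : QCTL AP := qEU qtop φ
def qAG [Inhabited AP] (φ : QCTL AP) : QCTL AP := qneg (qEF (qneg φ))
def qall (p : AP) (φ : QCTL AP) : QCTL AP := qneg (qexi p (qneg φ))

/-- All atomic propositions occurring in a formula (free or bound). -/
def atoms : QCTL AP → Set AP
  | atom p => {p}
  | qneg φ => φ.atoms
  | qor φ ψ => φ.atoms ∪ ψ.atoms
  | qEX φ => φ.atoms
  | qEU φ ψ => φ.atoms ∪ ψ.atoms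
  | qAU φ ψ => φ.atoms ∪ ψ.atoms
  | qexi p φ => insert p φ.atoms

/-- Size of a formula. -/
def qsize : QCTL AP → ℕ
  | atom _ => 1
  | qneg φ => φ.qsize + 1
  | qor φ ψ => φ.qsize + ψ.qsize + 1
  | qEX φ => φ.qsize + 1
  | qEU φ ψ => φ.qsize + ψ.qsize + 1
  | qAU φ ψ => φ.qsize + ψ.qsize + 1
  | qexi _ φ => φ.qsize + 1

end QCTL

/-- Equivalence of two QCTL formulas: same truth value at every state of every
(finite) Kripke structure. -/
def QEquiv (φ ψ : QCTL AP) : Prop :=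
  ∀ (V : Type) [Fintype V] (K : Kripke AP V) (x : V), φ.sat K x ↔ ψ.sat K x

/-!
Since `p` does not occur in `φ`, relabelling `p` changes neither the edges nor the truth of `φ`
(coincidence lemma). Hence the `∀p`-conjunct says that every set `S` of states either contains or
avoids the set `T` of `φ`-successors of `x`; testing `S = {a}` shows that this holds exactly when
`T` has at most one element, and `EX φ` says that `T` is nonempty.
-/

theorem Set.subsingleton_iff_forall_subset_or_disjoint {α : Type*} {T : Set α} :
    T.Subsingleton ↔ ∀ S : Set α, T ⊆ S ∨ Disjoint T S := by
  constructor
  · intro hT S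
    rcases hT.eq_empty_or_singleton with rfl | ⟨a, rfl⟩
    · exact Or.inr (Set.empty_disjoint S)
    · by_cases ha : a ∈ S
      · exact Or.inl (Set.singleton_subset_iff.mpr ha)
      · exact Or.inr (Set.disjoint_singleton_left.mpr ha)
  · intro h a ha b hb
    rcases h {a} with hsub | hdisj
    · exact (hsub hb).symm
    · exact absurd (Set.mem_singleton a) (Set.disjoint_left.mp hdisj ha)

namespace Kripke

def AgreeOn (K K' : Kripke AP V) (A : Set AP) : Prop :=
  K.E = K'.E ∧ ∀ v, ∀ q ∈ A, (q ∈ K.label v ↔ q ∈ K'.label v)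

theorem AgreeOn.symm {K K' : Kripke AP V} {A : Set AP} (h : K.AgreeOn K' A) :
    K'.AgreeOn K A :=
  ⟨h.1.symm, fun v q hq => (h.2 v q hq).symm⟩

theorem AgreeOn.mono {K K' : Kripke AP V} {A B : Set AP} (h : K.AgreeOn K' A) (hBA : B ⊆ A) :
    K.AgreeOn K' B :=
  ⟨h.1, fun v q hq => h.2 v q (hBA hq)⟩

theorem AgreeExcept.agreeOn {K K' : Kripke AP V} {p : AP} {A : Set AP}
    (h : K.AgreeExcept K' p) (hpA : p ∉ A) : K'.AgreeOn K A :=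
  ⟨h.1, fun v q hq => h.2 v q (ne_of_mem_of_not_mem hq hpA)⟩

def relabel (K : Kripke AP V) (p : AP) (S : Set V) : Kripke AP V :=
  ⟨K.E, K.serial, fun v => {q | (q ≠ p ∧ q ∈ K.label v) ∨ (q = p ∧ v ∈ S)}⟩

@[simp]
theorem relabel_E (K : Kripke AP V) (p : AP) (S : Set V) : (K.relabel p S).E = K.E :=
  rfl

@[simp]
theorem mem_label_relabel_self (K : Kripke AP V) (p : AP) (S : Set V) (v : V) :
    p ∈ (K.relabel p S).label v ↔ v ∈ S := by
  simp [relabel]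

theorem mem_label_relabel_of_ne (K : Kripke AP V) {p q : AP} (S : Set V) (v : V) (hq : q ≠ p) :
    q ∈ (K.relabel p S).label v ↔ q ∈ K.label v := by
  simp [relabel, hq]

theorem agreeExcept_relabel (K : Kripke AP V) (p : AP) (S : Set V) :
    K.AgreeExcept (K.relabel p S) p :=
  ⟨rfl, fun v _ hq => K.mem_label_relabel_of_ne S v hq⟩

end Kripke

namespace QCTL

@[simp]
theorem sat_qand (φ ψ : QCTL AP) (K : Kripke AP V) (x : V) :
    (qand φ ψ).sat K x ↔ φ.sat K x ∧ ψ.sat K x := by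
  simp [qand, sat]

@[simp]
theorem sat_qimp (φ ψ : QCTL AP) (K : Kripke AP V) (x : V) :
    (qimp φ ψ).sat K x ↔ (φ.sat K x → ψ.sat K x) := by
  simp only [qimp, sat, imp_iff_not_or]

@[simp]
theorem sat_qAX (φ : QCTL AP) (K : Kripke AP V) (x : V) :
    (qAX φ).sat K x ↔ ∀ y, K.E x y → φ.sat K y := by
  simp [qAX, sat]

@[simp]
theorem sat_qall (p : AP) (φ : QCTL AP) (K : Kripke AP V) (x : V) :
    (qall p φ).sat K x ↔ ∀ K', K.AgreeExcept K' p → φ.sat K' x := by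
  simp [qall, sat]

/-- A witness `K₁` for `∃ q. ψ` at `K` is copied onto `K'` by relabelling `q` in `K'` as in `K₁`. -/
theorem sat_qexi_of_agreeOn {q : AP} {ψ : QCTL AP}
    (ih : ∀ (K K' : Kripke AP V) (x : V), K.AgreeOn K' ψ.atoms → (ψ.sat K x ↔ ψ.sat K' x))
    {K K' : Kripke AP V} {x : V} (h : K.AgreeOn K' (insert q ψ.atoms))
    (hsat : (qexi q ψ).sat K x) : (qexi q ψ).sat K' x := by
  obtain ⟨K₁, hK₁, hψ⟩ := hsat
  set K₁' := K'.relabel q {v | q ∈ K₁.label v}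
  have hcopy : K₁.AgreeOn K₁' ψ.atoms := by
    refine ⟨hK₁.1.trans h.1, fun v r hr => ?_⟩
    by_cases hrq : r = q
    · rw [hrq]
      exact (K'.mem_label_relabel_self q {v | q ∈ K₁.label v} v).symm
    · rw [K'.mem_label_relabel_of_ne _ v hrq, hK₁.2 v r hrq]
      exact h.2 v r (Set.mem_insert_of_mem q hr)
  exact ⟨K₁', K'.agreeExcept_relabel q _, (ih K₁ K₁' x hcopy).mp hψ⟩

theorem sat_iff_of_agreeOn (φ : QCTL AP) :
    ∀ (K K' : Kripke AP V) (x : V), K.AgreeOn K' φ.atoms → (φ.sat K x ↔ φ.sat K' x) := by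
  induction φ with
  | atom q => exact fun K K' x h => h.2 x q rfl
  | qneg ψ ih => exact fun K K' x h => not_congr (ih K K' x h)
  | qor ψ χ ih₁ ih₂ =>
    exact fun K K' x h => or_congr (ih₁ K K' x (h.mono Set.subset_union_left))
      (ih₂ K K' x (h.mono Set.subset_union_right))
  | qEX ψ ih =>
    intro K K' x h
    have hψ := fun y => ih K K' y h
    simp only [sat, h.1, hψ]
  | qEU ψ χ ih₁ ih₂ =>
    intro K K' x h
    have hψ := fun y => ih₁ K K' y (h.mono Set.subset_union_left)
    have hχ := fun y => ih₂ K K' y (h.mono Set.subset_union_right)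
    simp only [sat, h.1, hψ, hχ]
  | qAU ψ χ ih₁ ih₂ =>
    intro K K' x h
    have hψ := fun y => ih₁ K K' y (h.mono Set.subset_union_left)
    have hχ := fun y => ih₂ K K' y (h.mono Set.subset_union_right)
    simp only [sat, h.1, hψ, hχ]
  | qexi q ψ ih =>
    exact fun K K' x h => ⟨sat_qexi_of_agreeOn ih h, sat_qexi_of_agreeOn ih h.symm⟩

theorem sat_iff_of_agreeExcept {φ : QCTL AP} {p : AP} (hp : p ∉ φ.atoms)
    {K K' : Kripke AP V} (h : K.AgreeExcept K' p) (x : V) : φ.sat K' x ↔ φ.sat K x :=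
  sat_iff_of_agreeOn φ K' K x (h.agreeOn hp)

theorem sat_qall_qAX_or_qAX_iff {φ : QCTL AP} {p : AP} (hp : p ∉ φ.atoms)
    (K : Kripke AP V) (x : V) :
    (qall p (qor (qAX (qimp φ (atom p))) (qAX (qimp φ (qneg (atom p)))))).sat K x ↔
      ∀ S : Set V, {y | K.E x y ∧ φ.sat K y} ⊆ S ∨ Disjoint {y | K.E x y ∧ φ.sat K y} S := by
  simp only [sat_qall, sat_qAX, sat_qimp, sat, Set.subset_def, Set.disjoint_left,
    Set.mem_ofPred_eq, and_imp]
  constructor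
  · intro h S
    simpa [sat_iff_of_agreeExcept hp (K.agreeExcept_relabel p S)]
      using h _ (K.agreeExcept_relabel p S)
  · intro h K' hK'
    simpa [hK'.1, sat_iff_of_agreeExcept hp hK'] using h {v | p ∈ K'.label v}

end QCTL

theorem uniqueX_correct_general {AP V : Type}
    (K : Kripke AP V) (x : V) (φ : QCTL AP) (p : AP) (hp : p ∉ φ.atoms) :
    (QCTL.qand (QCTL.qEX φ)
      (QCTL.qall p
        (QCTL.qor (QCTL.qAX (QCTL.qimp φ (QCTL.atom p)))
                  (QCTL.qAX (QCTL.qimp φ (QCTL.qneg (QCTL.atom p))))))).sat K x ↔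
      (∃! y : V, K.E x y ∧ φ.sat K y) := by
  rw [QCTL.sat_qand, QCTL.sat_qall_qAX_or_qAX_iff hp,
    ← Set.subsingleton_iff_forall_subset_or_disjoint]
  exact ⟨fun ⟨hex, huniq⟩ => existsUnique_of_exists_of_unique hex fun _ _ h₁ h₂ => huniq h₁ h₂,
    fun h => ⟨h.exists, h.setSubsingleton⟩⟩

/-- Correctness of the unique-successor formula
`E_{=1}X(φ) := EX φ ∧ ∀p.( AX(φ→p) ∨ AX(φ→¬p) )` (for `p` not occurring in `φ`):
it holds at `x` iff `x` has exactly one `E`-successor satisfying `φ`. -/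
theorem uniqueX_correct {AP V : Type} [Fintype V]
    (K : Kripke AP V) (x : V) (φ : QCTL AP) (p : AP) (hp : p ∉ φ.atoms) :
    (QCTL.qand (QCTL.qEX φ)
      (QCTL.qall p
        (QCTL.qor (QCTL.qAX (QCTL.qimp φ (QCTL.atom p)))
                  (QCTL.qAX (QCTL.qimp φ (QCTL.qneg (QCTL.atom p))))))).sat K x ↔
      (∃! y : V, K.E x y ∧ φ.sat K y) :=
  uniqueX_correct_general K x φ p hp
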